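/- If K₂ is obtained from K₁ by negating exactly the literals whose atoms lie in a set T (and K₁ is internally consistent with one literal per atom), then S*(K₁,K₂) = (|A \ T| - |T|)/(|A| + |T|), where A is the set of atoms of K₁. In particular S*(K₁,K₂) = 1 iff T = ∅, and S*(K₁,K₂) < 0 iff |T| > |A \ T|. -/

import Mathlib

variable {α : Type*} [DecidableEq α]

/-- Shared properties of two knowledge entities. -/
def Pshared (K₁ K₂ : Finset (α × Bool)) : Finset (α × Bool) := K₁ ∩ K₂

/-- Atoms asserted with opposite signs across the two entities. -/
def Pcontra (K₁ K₂ : Finset (α × Bool)) : Finset α :=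
  ((K₁ ∪ K₂).image Prod.fst).filter (fun p =>
    ((p, true) ∈ K₁ ∧ (p, false) ∈ K₂) ∨ ((p, false) ∈ K₁ ∧ (p, true) ∈ K₂))

/-- All properties of the two entities. -/
def Ptotal (K₁ K₂ : Finset (α × Bool)) : Finset (α × Bool) := K₁ ∪ K₂

/-- Paraconsistent similarity measure. -/
def Sstar (K₁ K₂ : Finset (α × Bool)) : ℚ :=
  if Ptotal K₁ K₂ = ∅ then 0
  else (((Pshared K₁ K₂).card : ℚ) - (Pcontra K₁ K₂).card) / (Ptotal K₁ K₂).card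

/-- Internal consistency: no atom appears both positively and negatively. -/
def ConsistentK (S : Finset (α × Bool)) : Prop :=
  ∀ p : α, ¬((p, true) ∈ S ∧ (p, false) ∈ S)

/-- Contradiction extractor. -/
def Eextract (K : Finset (α × Bool)) : Finset (α × Bool) :=
  K.filter (fun ℓ => (ℓ.1, !ℓ.2) ∈ K)

/-- Atoms occurring with both signs in `K`. -/
def contraAtoms (K : Finset (α × Bool)) : Finset α :=
  (K.image Prod.fst).filter (fun p => (p, true) ∈ K ∧ (p, false) ∈ K)

/-- Jaccard index on literal sets. -/
def Jaccard (K₁ K₂ : Finset (α × Bool)) : ℚ :=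
  if K₁ ∪ K₂ = ∅ then 1 else ((K₁ ∩ K₂).card : ℚ) / (K₁ ∪ K₂).card

theorem sstar_flip_signs (A T : Finset α) (f : α → Bool)
    (hT : T ⊆ A) (hA : A.Nonempty)
    (K₁ K₂ : Finset (α × Bool))
    (hK₁ : K₁ = A.image (fun p => (p, f p)))
    (hK₂ : K₂ = (A \ T).image (fun p => (p, f p)) ∪ T.image (fun p => (p, !f p))) :
    Sstar K₁ K₂ = (((A \ T).card : ℚ) - T.card) / ((A.card : ℚ) + T.card) ∧
    (Sstar K₁ K₂ = 1 ↔ T = ∅) ∧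
    (Sstar K₁ K₂ < 0 ↔ (A \ T).card < T.card) := by
  have hm1 : ∀ p b, (p, b) ∈ K₁ ↔ p ∈ A ∧ f p = b := by
    intro p b; subst hK₁; simp [Finset.mem_image]
  have hm2 : ∀ p b, (p, b) ∈ K₂ ↔ (p ∈ A ∧ p ∉ T ∧ f p = b) ∨ (p ∈ T ∧ (!f p) = b) := by
    intro p b; subst hK₂
    simp only [Finset.mem_union, Finset.mem_image, Finset.mem_sdiff, Prod.mk.injEq]
    constructor
    · rintro (⟨a, ⟨h1, h2⟩, rfl, rfl⟩ | ⟨a, h1, rfl, rfl⟩)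
      · exact Or.inl ⟨h1, h2, rfl⟩
      · exact Or.inr ⟨h1, rfl⟩
    · rintro (⟨h1, h2, rfl⟩ | ⟨h1, rfl⟩)
      · exact Or.inl ⟨p, ⟨h1, h2⟩, rfl, rfl⟩
      · exact Or.inr ⟨p, h1, rfl, rfl⟩
  -- Pshared
  have hsh : Pshared K₁ K₂ = (A \ T).image (fun p => (p, f p)) := by
    ext ⟨p, b⟩
    simp only [Pshared, Finset.mem_inter, hm1, hm2, Finset.mem_image, Finset.mem_sdiff,
      Prod.mk.injEq]
    constructor
    · rintro ⟨⟨hpA, rfl⟩, (⟨h1, h2, h3⟩ | ⟨h1, h2⟩)⟩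
      · exact ⟨p, ⟨h1, h2⟩, rfl, rfl⟩
      · simp at h2
    · rintro ⟨a, ⟨h1, h2⟩, rfl, rfl⟩
      exact ⟨⟨h1, rfl⟩, Or.inl ⟨h1, h2, rfl⟩⟩
  have hshc : (Pshared K₁ K₂).card = (A \ T).card := by
    rw [hsh]; exact Finset.card_image_of_injective _ (fun a b h => (Prod.mk.injEq _ _ _ _ ▸ h).1)
  -- Pcontra
  have hco : Pcontra K₁ K₂ = T := by
    ext p
    simp only [Pcontra, Finset.mem_filter, Finset.mem_image, Finset.mem_union, hm1, hm2]
    constructor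
    · rintro ⟨-, (⟨⟨hpA, hf⟩, h2⟩ | ⟨⟨hpA, hf⟩, h2⟩)⟩
      · rcases h2 with ⟨-, -, hf2⟩ | ⟨hT2, -⟩
        · rw [hf] at hf2; exact absurd hf2 (by simp)
        · exact hT2
      · rcases h2 with ⟨-, -, hf2⟩ | ⟨hT2, -⟩
        · rw [hf] at hf2; exact absurd hf2 (by simp)
        · exact hT2
    · intro hpT
      have hpA := hT hpT
      refine ⟨⟨(p, f p), Or.inl ⟨hpA, rfl⟩, rfl⟩, ?_⟩
      cases hf : f p
      · exact Or.inr ⟨⟨hpA, rfl⟩, Or.inr ⟨hpT, by simp⟩⟩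
      · exact Or.inl ⟨⟨hpA, rfl⟩, Or.inr ⟨hpT, by simp⟩⟩
  -- Ptotal
  have hto : Ptotal K₁ K₂ = A.image (fun p => (p, f p)) ∪ T.image (fun p => (p, !f p)) := by
    ext ⟨p, b⟩
    simp only [Ptotal, Finset.mem_union, hm1, hm2, Finset.mem_image, Prod.mk.injEq]
    constructor
    · rintro (⟨h1, rfl⟩ | (⟨h1, h2, rfl⟩ | ⟨h1, rfl⟩))
      · exact Or.inl ⟨p, h1, rfl, rfl⟩
      · exact Or.inl ⟨p, h1, rfl, rfl⟩
      · exact Or.inr ⟨p, h1, rfl, rfl⟩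
    · rintro (⟨a, h1, rfl, rfl⟩ | ⟨a, h1, rfl, rfl⟩)
      · exact Or.inl ⟨h1, rfl⟩
      · exact Or.inr (Or.inr ⟨h1, rfl⟩)
  have hdisj : Disjoint (A.image (fun p => (p, f p))) (T.image (fun p => (p, !f p))) := by
    rw [Finset.disjoint_left]
    rintro ⟨p, b⟩ h1 h2
    simp only [Finset.mem_image, Prod.mk.injEq] at h1 h2
    obtain ⟨a, -, rfl, rfl⟩ := h1
    obtain ⟨c, -, rfl, hc⟩ := h2
    simp at hc
  have htoc : (Ptotal K₁ K₂).card = A.card + T.card := by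
    rw [hto, Finset.card_union_of_disjoint hdisj,
      Finset.card_image_of_injective _ (fun a b h => (Prod.mk.injEq _ _ _ _ ▸ h).1),
      Finset.card_image_of_injective _ (fun a b h => (Prod.mk.injEq _ _ _ _ ▸ h).1)]
  have hne : Ptotal K₁ K₂ ≠ ∅ := by
    intro h
    have h0 := htoc
    rw [h, Finset.card_empty] at h0
    have hA0 : A.card = 0 := by omega
    exact hA.ne_empty (Finset.card_eq_zero.1 hA0)
  have hval : Sstar K₁ K₂ = (((A \ T).card : ℚ) - T.card) / ((A.card : ℚ) + T.card) := by
    rw [Sstar, if_neg hne, hshc, hco, htoc]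
    push_cast
    ring_nf
  have hcard : (A \ T).card + T.card = A.card := Finset.card_sdiff_add_card_eq_card hT
  have hApos : (0 : ℚ) < (A.card : ℚ) + T.card := by
    have : 0 < A.card := Finset.card_pos.2 hA
    positivity
  refine ⟨hval, ?_, ?_⟩
  · rw [hval, div_eq_one_iff_eq (ne_of_gt hApos)]
    constructor
    · intro h
      have : (T.card : ℚ) = 0 := by
        have hc : ((A \ T).card : ℚ) + T.card = A.card := by exact_mod_cast hcard
        linarith
      have : T.card = 0 := by exact_mod_cast this
      exact Finset.card_eq_zero.1 this
    · rintro rfl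
      simp [Finset.card_sdiff_of_subset hT] at *
  · rw [hval, div_neg_iff]
    constructor
    · rintro (⟨h1, h2⟩ | ⟨h1, h2⟩)
      · linarith
      · have hlt : ((A \ T).card : ℚ) < T.card := by linarith
        exact_mod_cast hlt
    · intro h
      right
      constructor
      · have : ((A \ T).card : ℚ) < T.card := by exact_mod_cast h
        linarith
      · exact hApos
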